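/- Under the standing slope setup, if m = 1 and q ≥ 1 then the Hausdorff dimension of 𝓗 ∩ K equals 1, where 𝓗 is the union of all (infinite) straight lines contained in H. -/

import Mathlib

open Set Metric Topology Pointwise Filter

noncomputable section

abbrev Plane : Type := EuclideanSpace ℝ (Fin 2)

/-- The closed unit square `[0,1]²` in the plane. -/
def unitSq : Set Plane := {x | x 0 ∈ Icc (0:ℝ) 1 ∧ x 1 ∈ Icc (0:ℝ) 1}

/-- The embedding of `ℤ²` into the plane. -/
def emb (d : ℤ × ℤ) : Plane := WithLp.toLp 2 ![(d.1 : ℝ), (d.2 : ℝ)]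

/-- The `n`-th approximation `K⁽ⁿ⁾` of the fractal square:
`K⁽⁰⁾ = [0,1]²`, `K⁽ⁿ⁾ = ⋃_{d ∈ D} (K⁽ⁿ⁻¹⁾ + d) / N`. -/
def approx (N : ℕ) (D : Finset (ℤ × ℤ)) : ℕ → Set Plane
  | 0 => unitSq
  | n + 1 => ⋃ d ∈ D, (fun x => (N : ℝ)⁻¹ • (x + emb d)) '' approx N D n

/-- The fractal square `K = K(N, D) = ⋂_{n ≥ 1} K⁽ⁿ⁾`. -/
def FS (N : ℕ) (D : Finset (ℤ × ℤ)) : Set Plane := ⋂ n : ℕ, approx N D (n + 1)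

/-- The lattice `ℤ² ⊆ ℝ²`. -/
def lattice : Set Plane := Set.range emb

/-- `H = K + ℤ²`. -/
def orbitH (N : ℕ) (D : Finset (ℤ × ℤ)) : Set Plane := FS N D + lattice

/-- A digit set for order `N`: a subset of `{0, …, N-1}²` with at least two elements. -/
def IsDigitSet (N : ℕ) (D : Finset (ℤ × ℤ)) : Prop :=
  2 ≤ D.card ∧ ∀ d ∈ D, 0 ≤ d.1 ∧ d.1 ≤ (N : ℤ) - 1 ∧ 0 ≤ d.2 ∧ d.2 ≤ (N : ℤ) - 1

/-- `Hₙ = K⁽ⁿ⁾ + ℤ²`. -/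
def Hn (N : ℕ) (D : Finset (ℤ × ℤ)) (n : ℕ) : Set Plane := approx N D n + lattice

/-- The projection `Π(x₁, x₂) = x₂ − τ·x₁`. -/
def proj (τ : ℝ) (x : Plane) : ℝ := x 1 - τ * x 0

/-- `Ωₙ = [0, 1/s] \ Π(ℝ² \ Hₙ)`. -/
def OmegaN (N : ℕ) (D : Finset (ℤ × ℤ)) (τ : ℝ) (s : ℕ) (n : ℕ) : Set ℝ :=
  Icc 0 (1 / (s : ℝ)) \ proj τ '' (Hn N D n)ᶜ

/-- `Ω = [0, 1/s] \ Π(ℝ² \ H)`. -/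
def Omega (N : ℕ) (D : Finset (ℤ × ℤ)) (τ : ℝ) (s : ℕ) : Set ℝ :=
  Icc 0 (1 / (s : ℝ)) \ proj τ '' (orbitH N D)ᶜ

/-- `Φ(X) = ⋃ᵢ h_{uᵢ}(X)` where `h_u(t) = (t + u)/N`. -/
def Phi (N : ℕ) {m : ℕ} (u : Fin m → ℤ) : Set ℝ → Set ℝ :=
  fun X => ⋃ i, (fun t => (t + (u i : ℝ)) / N) '' X

/-- `Eₙ = ⋃_{i=0}^{n-1} Φⁱ(A₁)`. -/
def Eset (N : ℕ) {m : ℕ} (u : Fin m → ℤ) (A : Set ℝ) (n : ℕ) : Set ℝ :=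
  ⋃ i ∈ Finset.range n, (Phi N u)^[i] A

/-- The "standing slope setup" hypotheses: `K` has a singleton component and a
nondegenerate component, every nondegenerate component of `K` is a straight
line segment of slope `τ = r/s`, and `Ω₁` is the disjoint union of a finite set
`A₁` of `q` isolated points of `Ω₁` and of `m` nondegenerate connected
components `[uᵢ/(Ns), (uᵢ+1)/(Ns)]` with `0 ≤ u₁ < … < u_m ≤ N−1`. -/
structure SlopeSetup (N : ℕ) (D : Finset (ℤ × ℤ)) (r : ℤ) (s : ℕ) (τ : ℝ)
    (A₁ : Finset ℝ) (q m : ℕ) (u : Fin m → ℤ) : Prop where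
  hN : 2 ≤ N
  hD : IsDigitSet N D
  hr : r ≠ 0
  hs : 0 < s
  hgcd : Int.gcd r (s : ℤ) = 1
  hτ : τ = (r : ℝ) / (s : ℝ)
  hsing : ∃ x ∈ FS N D, connectedComponentIn (FS N D) x = {x}
  hnondeg : ∃ x ∈ FS N D, connectedComponentIn (FS N D) x ≠ {x}
  hslope : ∀ x ∈ FS N D, connectedComponentIn (FS N D) x ≠ {x} →
    ∃ a b : Plane, a 0 ≠ b 0 ∧ connectedComponentIn (FS N D) x = segment ℝ a b ∧
      b 1 - a 1 = τ * (b 0 - a 0)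
  hq : q = A₁.card
  humono : StrictMono u
  hurange : ∀ i, 0 ≤ u i ∧ u i ≤ (N : ℤ) - 1
  hdecomp : OmegaN N D τ s 1 =
    ↑A₁ ∪ ⋃ i, Icc ((u i : ℝ) / ((N : ℝ) * s)) (((u i : ℝ) + 1) / ((N : ℝ) * s))
  hdisj : ∀ v ∈ A₁,
    v ∉ ⋃ i, Icc ((u i : ℝ) / ((N : ℝ) * s)) (((u i : ℝ) + 1) / ((N : ℝ) * s))
  hiso : ∀ v ∈ A₁, ∃ ε > 0, OmegaN N D τ s 1 ∩ ball v ε = {v}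
  hcomps : ∀ i, ∀ t ∈ Icc ((u i : ℝ) / ((N : ℝ) * s)) (((u i : ℝ) + 1) / ((N : ℝ) * s)),
    connectedComponentIn (OmegaN N D τ s 1) t =
      Icc ((u i : ℝ) / ((N : ℝ) * s)) (((u i : ℝ) + 1) / ((N : ℝ) * s))

/-- The union of all (infinite) affine lines contained in `A`. -/
def linesIn (A : Set Plane) : Set Plane :=
  {x | ∃ a v : Plane, v ≠ 0 ∧ (∃ t : ℝ, x = a + t • v) ∧ ∀ t : ℝ, a + t • v ∈ A}

section Aux
variable {N : ℕ} {D : Finset (ℤ × ℤ)}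

lemma plane_ext {x y : Plane} (h0 : x 0 = y 0) (h1 : x 1 = y 1) : x = y := by
  apply PiLp.ext; intro i; fin_cases i <;> assumption

@[simp] lemma emb0 (d : ℤ×ℤ) : emb d 0 = (d.1:ℝ) := rfl
@[simp] lemma emb1 (d : ℤ×ℤ) : emb d 1 = (d.2:ℝ) := rfl
@[simp] lemma add_app (x y : Plane) (i : Fin 2) : (x + y) i = x i + y i := rfl
@[simp] lemma sub_app (x y : Plane) (i : Fin 2) : (x - y) i = x i - y i := rfl
@[simp] lemma smul_app (c : ℝ) (x : Plane) (i : Fin 2) : (c • x) i = c * x i := rfl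
@[simp] lemma neg_app (x : Plane) (i : Fin 2) : (-x) i = -(x i) := rfl

lemma emb_add (a b : ℤ×ℤ) : emb (a + b) = emb a + emb b := by
  apply plane_ext <;> simp

lemma emb_neg (a : ℤ×ℤ) : emb (-a) = - emb a := by
  apply plane_ext <;> simp

lemma continuous_app (i : Fin 2) : Continuous fun x : Plane => x i :=
  (EuclideanSpace.proj i).continuous

lemma isClosed_unitSq : IsClosed unitSq := by
  have : unitSq = (fun x : Plane => x 0) ⁻¹' Icc 0 1 ∩ (fun x : Plane => x 1) ⁻¹' Icc 0 1 := rfl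
  rw [this]
  exact ((isClosed_Icc.preimage (continuous_app 0)).inter (isClosed_Icc.preimage (continuous_app 1)))

lemma isCompact_unitSq : IsCompact unitSq := by
  apply Metric.isCompact_of_isClosed_isBounded isClosed_unitSq
  rw [Metric.isBounded_iff_subset_closedBall 0]
  refine ⟨2, fun x hx => ?_⟩
  obtain ⟨h0, h1⟩ := hx
  simp only [Metric.mem_closedBall, dist_zero_right]
  have := EuclideanSpace.norm_eq x
  rw [this]
  have : ∑ i, ‖x i‖ ^ 2 ≤ 2 := by
    rw [Fin.sum_univ_two]
    have a0 : ‖x 0‖ ≤ 1 := by rw [Real.norm_eq_abs, abs_le]; constructor <;> linarith [h0.1, h0.2]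
    have a1 : ‖x 1‖ ≤ 1 := by rw [Real.norm_eq_abs, abs_le]; constructor <;> linarith [h1.1, h1.2]
    nlinarith [norm_nonneg (x 0), norm_nonneg (x 1)]
  calc Real.sqrt (∑ i, ‖x i‖ ^ 2) ≤ Real.sqrt 2 := Real.sqrt_le_sqrt this
    _ ≤ 2 := by
        nlinarith [Real.sq_sqrt (show (0:ℝ) ≤ 2 by norm_num), Real.sqrt_nonneg 2]

lemma isCompact_approx (N : ℕ) (D : Finset (ℤ × ℤ)) : ∀ n, IsCompact (approx N D n) := by
  intro n
  induction n with
  | zero => exact isCompact_unitSq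
  | succ n ih =>
    rw [approx]
    apply D.finite_toSet.isCompact_biUnion
    intro d _
    exact ih.image (by fun_prop)

lemma isClosed_lattice : IsClosed lattice := by
  have : lattice = (fun x : Plane => x 0) ⁻¹' (Set.range ((↑) : ℤ → ℝ)) ∩
      (fun x : Plane => x 1) ⁻¹' (Set.range ((↑) : ℤ → ℝ)) := by
    ext x
    constructor
    · rintro ⟨d, rfl⟩; exact ⟨⟨d.1, rfl⟩, ⟨d.2, rfl⟩⟩
    · rintro ⟨⟨a, ha⟩, ⟨b, hb⟩⟩
      exact ⟨(a, b), plane_ext ha hb⟩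
  rw [this]
  exact ((Int.isClosedEmbedding_coe_real.isClosed_range.preimage (continuous_app 0)).inter
    (Int.isClosedEmbedding_coe_real.isClosed_range.preimage (continuous_app 1)))

lemma isClosed_Hn (N : ℕ) (D : Finset (ℤ × ℤ)) (n : ℕ) : IsClosed (Hn N D n) := by
  have h : Hn N D n = lattice +ᵥ approx N D n := by
    rw [Hn, AddCommMonoid.add_comm (approx N D n) lattice]; rfl
  rw [h]
  exact isClosed_lattice.vadd_right_of_isCompact (isCompact_approx N D n)
end Aux
section Aux2
variable {N : ℕ} {D : Finset (ℤ × ℤ)}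

lemma approx_subset_unitSq (hN : 0 < N) (hD : ∀ d ∈ D, 0 ≤ d.1 ∧ d.1 ≤ (N : ℤ) - 1 ∧ 0 ≤ d.2 ∧ d.2 ≤ (N : ℤ) - 1) :
    ∀ n, approx N D n ⊆ unitSq := by
  intro n
  induction n with
  | zero => exact subset_rfl
  | succ n ih =>
    rw [approx]
    rintro x hx
    simp only [Set.mem_iUnion] at hx
    obtain ⟨d, hd, y, hy, rfl⟩ := hx
    obtain ⟨hy0, hy1⟩ := ih hy
    obtain ⟨h1, h2, h3, h4⟩ := hD d hd
    have hNpos : (0:ℝ) < N := by exact_mod_cast hN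
    have hd1 : (0:ℝ) ≤ d.1 ∧ (d.1:ℝ) ≤ (N:ℝ) - 1 := by
      constructor <;> [exact_mod_cast h1; exact_mod_cast h2]
    have hd2 : (0:ℝ) ≤ d.2 ∧ (d.2:ℝ) ≤ (N:ℝ) - 1 := by
      constructor <;> [exact_mod_cast h3; exact_mod_cast h4]
    constructor
    · simp only [smul_app, add_app, emb0]
      constructor
      · exact mul_nonneg (by positivity) (by linarith [hy0.1, hd1.1])
      · rw [inv_mul_le_iff₀ hNpos, mul_one]
        have := hy0.2; linarith [hd1.2]
    · simp only [smul_app, add_app, emb1]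
      constructor
      · exact mul_nonneg (by positivity) (by linarith [hy1.1, hd2.1])
      · rw [inv_mul_le_iff₀ hNpos, mul_one]
        have := hy1.2; linarith [hd2.2]

lemma approx_succ_subset (hN : 0 < N) (hD : ∀ d ∈ D, 0 ≤ d.1 ∧ d.1 ≤ (N : ℤ) - 1 ∧ 0 ≤ d.2 ∧ d.2 ≤ (N : ℤ) - 1) :
    ∀ n, approx N D (n+1) ⊆ approx N D n := by
  intro n
  induction n with
  | zero => exact approx_subset_unitSq hN hD 1
  | succ n ih =>
    rw [approx, approx]
    exact Set.iUnion₂_mono fun d _ => Set.image_mono ih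

lemma approx_antitone (hN : 0 < N) (hD : ∀ d ∈ D, 0 ≤ d.1 ∧ d.1 ≤ (N : ℤ) - 1 ∧ 0 ≤ d.2 ∧ d.2 ≤ (N : ℤ) - 1) :
    Antitone (approx N D) :=
  antitone_nat_of_succ_le (approx_succ_subset hN hD)

lemma FS_subset_approx (hN : 0 < N) (hD : ∀ d ∈ D, 0 ≤ d.1 ∧ d.1 ≤ (N : ℤ) - 1 ∧ 0 ≤ d.2 ∧ d.2 ≤ (N : ℤ) - 1) :
    ∀ n, FS N D ⊆ approx N D n := by
  intro n
  cases n with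
  | zero => exact (Set.iInter_subset _ 0).trans (approx_succ_subset hN hD 0)
  | succ n => exact Set.iInter_subset _ n

lemma mem_Hn_iff {n : ℕ} {x : Plane} : x ∈ Hn N D n ↔ ∃ z : ℤ × ℤ, x - emb z ∈ approx N D n := by
  constructor
  · rintro ⟨k, hk, l, ⟨z, rfl⟩, rfl⟩
    exact ⟨z, by simpa using hk⟩
  · rintro ⟨z, hz⟩
    exact ⟨x - emb z, hz, emb z, ⟨z, rfl⟩, sub_add_cancel x (emb z)⟩

lemma mem_orbitH_iff {x : Plane} : x ∈ orbitH N D ↔ ∃ z : ℤ × ℤ, x - emb z ∈ FS N D := by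
  constructor
  · rintro ⟨k, hk, l, ⟨z, rfl⟩, rfl⟩
    exact ⟨z, by simpa using hk⟩
  · rintro ⟨z, hz⟩
    exact ⟨x - emb z, hz, emb z, ⟨z, rfl⟩, sub_add_cancel x (emb z)⟩

lemma mem_Hn_zero (x : Plane) : x ∈ Hn N D 0 := by
  rw [mem_Hn_iff]
  refine ⟨(⌊x 0⌋, ⌊x 1⌋), ?_, ?_⟩ <;>
  · simp only [sub_app, emb0, emb1]
    constructor
    · linarith [Int.floor_le (x 0), Int.floor_le (x 1)]
    · linarith [Int.lt_floor_add_one (x 0), Int.lt_floor_add_one (x 1)]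

lemma Hn_add_emb {n : ℕ} {x : Plane} (z : ℤ × ℤ) (hx : x ∈ Hn N D n) :
    x + emb z ∈ Hn N D n := by
  rw [mem_Hn_iff] at hx ⊢
  obtain ⟨w, hw⟩ := hx
  refine ⟨w + z, ?_⟩
  rw [emb_add, show x + emb z - (emb w + emb z) = x - emb w by abel]
  exact hw

lemma orbitH_add_emb {x : Plane} (z : ℤ × ℤ) (hx : x ∈ orbitH N D) :
    x + emb z ∈ orbitH N D := by
  rw [mem_orbitH_iff] at hx ⊢
  obtain ⟨w, hw⟩ := hx
  refine ⟨w + z, ?_⟩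
  rw [emb_add, show x + emb z - (emb w + emb z) = x - emb w by abel]
  exact hw

lemma smul_mem_Hn (hN : 0 < N) {n : ℕ} {x : Plane} (hx : x ∈ Hn N D (n+1)) :
    (N : ℝ) • x ∈ Hn N D n := by
  rw [mem_Hn_iff] at hx ⊢
  obtain ⟨w, hw⟩ := hx
  rw [approx] at hw
  simp only [Set.mem_iUnion] at hw
  obtain ⟨d, hd, y, hy, hxy⟩ := hw
  have hNne : (N:ℝ) ≠ 0 := by positivity
  refine ⟨(d.1 + N * w.1, d.2 + N * w.2), ?_⟩
  have h1 : (N:ℝ) • (x - emb w) = y + emb d := by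
    rw [← hxy, smul_smul, mul_inv_cancel₀ hNne, one_smul]
  have h2 : (N:ℝ) • x = y + emb d + (N:ℝ) • emb w := by
    rw [← h1, smul_sub]; abel
  rw [h2]
  have h3 : y + emb d + (N:ℝ) • emb w - emb (↑d.1 + ↑N * w.1, ↑d.2 + ↑N * w.2) = y := by
    apply plane_ext <;> simp <;> push_cast <;> ring
  rw [h3]
  exact hy

lemma mem_orbitH_of_forall_Hn (hN : 0 < N)
    (hD : ∀ d ∈ D, 0 ≤ d.1 ∧ d.1 ≤ (N : ℤ) - 1 ∧ 0 ≤ d.2 ∧ d.2 ≤ (N : ℤ) - 1)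
    {x : Plane} (hx : ∀ n, x ∈ Hn N D n) : x ∈ orbitH N D := by
  have hch : ∀ n : ℕ, ∃ z : ℤ × ℤ, x - emb z ∈ approx N D (n+1) := fun n =>
    mem_Hn_iff.mp (hx (n+1))
  choose g hg using hch
  -- the witnesses live in a finite set
  have hsub : ∀ n, g n ∈ Set.Icc (⌊x 0⌋ - 1, ⌊x 1⌋ - 1) (⌊x 0⌋, ⌊x 1⌋) := by
    intro n
    have h := approx_subset_unitSq hN hD (n+1) (hg n)
    obtain ⟨⟨a0, b0⟩, ⟨a1, b1⟩⟩ := h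
    simp only [sub_app, emb0, emb1] at a0 a1 b0 b1
    have l1 : (g n).1 ≤ ⌊x 0⌋ := Int.le_floor.mpr (by linarith)
    have l2 : (g n).2 ≤ ⌊x 1⌋ := Int.le_floor.mpr (by linarith)
    have l3 : ⌊x 0⌋ - 1 ≤ (g n).1 := by
      have : ⌊x 0⌋ ≤ ⌊((g n).1 : ℝ) + 1⌋ := Int.floor_le_floor (by linarith)
      rw [show ((g n).1 : ℝ) + 1 = (((g n).1 + 1 : ℤ) : ℝ) by push_cast; ring,
        Int.floor_intCast] at this
      omega
    have l4 : ⌊x 1⌋ - 1 ≤ (g n).2 := by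
      have : ⌊x 1⌋ ≤ ⌊((g n).2 : ℝ) + 1⌋ := Int.floor_le_floor (by linarith)
      rw [show ((g n).2 : ℝ) + 1 = (((g n).2 + 1 : ℤ) : ℝ) by push_cast; ring,
        Int.floor_intCast] at this
      omega
    exact ⟨⟨l3, l4⟩, ⟨l1, l2⟩⟩
  set Z := Set.Icc (⌊x 0⌋ - 1, ⌊x 1⌋ - 1) (⌊x 0⌋, ⌊x 1⌋) with hZ
  have hZfin : Z.Finite := Set.finite_Icc _ _
  haveI : Finite Z := hZfin.to_subtype
  obtain ⟨⟨z, hzZ⟩, hzinf⟩ := Finite.exists_infinite_fiber (fun n => (⟨g n, hsub n⟩ : Z))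
  rw [mem_orbitH_iff]
  refine ⟨z, Set.mem_iInter.mpr fun m => ?_⟩
  have hinf : {n | g n = z}.Infinite := by
    have hset : {n | g n = z} = (fun n => (⟨g n, hsub n⟩ : Z)) ⁻¹' {⟨z, hzZ⟩} := by
      ext n; simp [Subtype.ext_iff]
    rw [hset]
    exact Set.infinite_coe_iff.mp hzinf
  obtain ⟨n, hn, hmn⟩ := hinf.exists_gt m
  have := hg n
  rw [hn] at this
  exact approx_antitone hN hD (Nat.succ_le_succ hmn.le) this

end Aux2
section Aux3
variable {N : ℕ} {D : Finset (ℤ × ℤ)}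

/-- The fiber (line of slope τ) over `t`. -/
def lfiber (τ t : ℝ) : Set Plane := {x | proj τ x = t}

/-- Parametrization of the fiber. -/
def lparam (τ t : ℝ) (c : ℝ) : Plane := WithLp.toLp 2 ![c, τ * c + t]

@[simp] lemma lparam0 (τ t c : ℝ) : lparam τ t c 0 = c := rfl
@[simp] lemma lparam1 (τ t c : ℝ) : lparam τ t c 1 = τ * c + t := rfl

lemma lparam_mem (τ t c : ℝ) : lparam τ t c ∈ lfiber τ t := by
  simp [lfiber, proj]

lemma continuous_lparam (τ t : ℝ) : Continuous (lparam τ t) := by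
  have h0 : Continuous fun c : ℝ => (c, τ * c + t) := by fun_prop
  have : lparam τ t = (fun p : ℝ × ℝ => (WithLp.toLp 2 ![p.1, p.2] : Plane)) ∘ (fun c => (c, τ * c + t)) := rfl
  rw [this]
  refine Continuous.comp ?_ h0
  have : (fun p : ℝ × ℝ => (WithLp.toLp 2 ![p.1, p.2] : Plane)) =
      fun p : ℝ × ℝ => ((EuclideanSpace.equiv (Fin 2) ℝ).symm ![p.1, p.2]) := rfl
  rw [this]
  refine (EuclideanSpace.equiv (Fin 2) ℝ).symm.continuous.comp ?_
  apply continuous_pi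
  intro i
  fin_cases i <;> simp <;> fun_prop

lemma mem_lfiber_iff {τ t : ℝ} {x : Plane} : x ∈ lfiber τ t ↔ x = lparam τ t (x 0) := by
  constructor
  · intro hx
    apply plane_ext
    · simp
    · simp only [lparam1]
      have : x 1 - τ * x 0 = t := hx
      linarith
  · intro hx
    rw [hx]
    exact lparam_mem τ t (x 0)

lemma lfiber_eq_range (τ t : ℝ) : lfiber τ t = Set.range (lparam τ t) := by
  ext x
  constructor
  · intro hx; exact ⟨x 0, (mem_lfiber_iff.mp hx).symm⟩
  · rintro ⟨c, rfl⟩; exact lparam_mem τ t c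

lemma proj_add_emb (τ : ℝ) (x : Plane) (z : ℤ × ℤ) :
    proj τ (x + emb z) = proj τ x + ((z.2 : ℝ) - τ * z.1) := by
  simp [proj]; ring

lemma proj_sub_emb (τ : ℝ) (x : Plane) (z : ℤ × ℤ) :
    proj τ (x - emb z) = proj τ x - ((z.2 : ℝ) - τ * z.1) := by
  simp [proj]; ring

lemma proj_smul (τ c : ℝ) (x : Plane) : proj τ (c • x) = c * proj τ x := by
  simp [proj]; ring

lemma bezout {r : ℤ} {s : ℕ} {τ : ℝ} (hs : 0 < s) (hgcd : Int.gcd r (s:ℤ) = 1)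
    (hτ : τ = (r:ℝ) / s) (k : ℤ) : ∃ a b : ℤ, (b:ℝ) - τ * a = (k:ℝ) / s := by
  obtain ⟨u, v, huv⟩ := Int.isCoprime_iff_gcd_eq_one.mpr hgcd
  refine ⟨-(k*u), k*v, ?_⟩
  have hsne : (s:ℝ) ≠ 0 := Nat.cast_ne_zero.mpr hs.ne'
  have hZ : k*v*(s:ℤ) - r*(-(k*u)) = k := by linear_combination k * huv
  rw [hτ]
  field_simp
  have hc : (u:ℝ)*r + (v:ℝ)*s = 1 := by exact_mod_cast congrArg (fun z : ℤ => (z:ℝ)) huv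
  push_cast
  linear_combination (k:ℝ) * hc

/-- The set of offsets whose whole fiber line is contained in every `Hₙ`. -/
def Tset (N : ℕ) (D : Finset (ℤ × ℤ)) (τ : ℝ) : Set ℝ :=
  {t | ∀ n, lfiber τ t ⊆ Hn N D n}

lemma Tset_shift {τ : ℝ} {t : ℝ} (a b : ℤ) (ht : t ∈ Tset N D τ) :
    t + ((b:ℝ) - τ * a) ∈ Tset N D τ := by
  intro n x hx
  have hx' : x - emb (a, b) ∈ lfiber τ t := by
    rw [lfiber, Set.mem_setOf_eq, proj_sub_emb]
    have : proj τ x = t + ((b:ℝ) - τ * a) := hx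
    rw [this]; simp
  have := ht n hx'
  have h2 := Hn_add_emb (a, b) this
  rwa [sub_add_cancel] at h2

lemma Tset_scale (hN : 0 < N) {τ : ℝ} {t : ℝ} (ht : t ∈ Tset N D τ) :
    (N:ℝ) * t ∈ Tset N D τ := by
  intro n x hx
  have hNne : (N:ℝ) ≠ 0 := by positivity
  have h1 : (N:ℝ)⁻¹ • x ∈ lfiber τ t := by
    rw [lfiber, Set.mem_setOf_eq, proj_smul]
    have : proj τ x = (N:ℝ) * t := hx
    rw [this, ← mul_assoc, inv_mul_cancel₀ hNne, one_mul]
  have h2 := ht (n+1) h1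
  have h3 := smul_mem_Hn hN h2
  rwa [smul_smul, mul_inv_cancel₀ hNne, one_smul] at h3

lemma Tset_mem_OmegaN {τ : ℝ} {s : ℕ} {t : ℝ}
    (ht : t ∈ Tset N D τ) (ht' : t ∈ Icc 0 (1/(s:ℝ))) : t ∈ OmegaN N D τ s 1 := by
  refine ⟨ht', ?_⟩
  rintro ⟨x, hx, rfl⟩
  exact hx (ht 1 rfl)

lemma OmegaN_fiber_subset {τ : ℝ} {s : ℕ} {t : ℝ} (ht : t ∈ OmegaN N D τ s 1) :
    lfiber τ t ⊆ Hn N D 1 := by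
  intro x hx
  by_contra hc
  exact ht.2 ⟨x, hc, hx⟩

lemma floor_of_unit {t : ℝ} {p : ℤ} (h0 : 0 ≤ t - p) (h1 : t - p ≤ 1)
    (hni : ∀ k : ℤ, t ≠ (k:ℝ)) : p = ⌊t⌋ := by
  symm
  rw [Int.floor_eq_iff]
  constructor
  · linarith
  · have : t - p ≠ 1 := fun h => hni (p + 1) (by push_cast; linarith)
    push_cast
    cases lt_or_eq_of_le h1 with
    | inl h => linarith
    | inr h => exact absurd h this

/-- Key induction: the fiber over a `Φ`-fixed offset inside `Ω₁` lies in every `Hₙ`. -/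
lemma fiber_fixed_subset_Hn (hN : 2 ≤ N)
    (hD : ∀ d ∈ D, 0 ≤ d.1 ∧ d.1 ≤ (N : ℤ) - 1 ∧ 0 ≤ d.2 ∧ d.2 ≤ (N : ℤ) - 1)
    {r : ℤ} {s : ℕ} {τ : ℝ} (hr : r ≠ 0) (hs : 0 < s)
    (hgcd : Int.gcd r (s:ℤ) = 1) (hτ : τ = (r:ℝ) / s)
    {tstar : ℝ} {u0 : ℤ} (hfix : (N:ℝ) * tstar = tstar + (u0:ℝ)/s)
    (hΩ : lfiber τ tstar ⊆ Hn N D 1) :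
    ∀ n, lfiber τ tstar ⊆ Hn N D n := by
  have hN0 : 0 < N := by omega
  have hNR : (0:ℝ) < N := by exact_mod_cast hN0
  have hNne : (N:ℝ) ≠ 0 := hNR.ne'
  have hτne : τ ≠ 0 := by
    rw [hτ]
    exact div_ne_zero (Int.cast_ne_zero.mpr hr) (Nat.cast_ne_zero.mpr hs.ne')
  intro n
  induction n with
  | zero => exact fun x _ => mem_Hn_zero x
  | succ n ih =>
    -- the set of "good" parameters, whose bad set is countable
    set Bad : Set ℝ := (fun c : ℝ => (N:ℝ) * c) ⁻¹' (Set.range ((↑) : ℤ → ℝ)) ∪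
        (fun c : ℝ => (N:ℝ) * (τ * c + tstar)) ⁻¹' (Set.range ((↑) : ℤ → ℝ)) with hBad
    have hBadc : Bad.Countable := by
      apply Set.Countable.union
      · have : (fun c : ℝ => (N:ℝ) * c) ⁻¹' (Set.range ((↑) : ℤ → ℝ)) ⊆
            ⋃ k : ℤ, {(k:ℝ) / N} := by
          rintro c ⟨k, hk⟩
          refine Set.mem_iUnion.mpr ⟨k, ?_⟩
          simp only [Set.mem_singleton_iff]
          have hk' : (k:ℝ) = (N:ℝ) * c := hk
          rw [eq_div_iff hNne, eq_comm]
          linear_combination hk'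
        exact Set.Countable.mono this (Set.countable_iUnion fun k => Set.countable_singleton _)
      · have : (fun c : ℝ => (N:ℝ) * (τ * c + tstar)) ⁻¹' (Set.range ((↑) : ℤ → ℝ)) ⊆
            ⋃ k : ℤ, {((k:ℝ) / N - tstar) / τ} := by
          rintro c ⟨k, hk⟩
          refine Set.mem_iUnion.mpr ⟨k, ?_⟩
          simp only [Set.mem_singleton_iff]
          have hk' : (k:ℝ) = (N:ℝ) * (τ * c + tstar) := hk
          rw [eq_div_iff hτne, eq_comm]
          field_simp
          linear_combination hk'
        exact Set.Countable.mono this (Set.countable_iUnion fun k => Set.countable_singleton _)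
    -- main step: good parameters map into H_{n+1}
    have hgood : ∀ c ∉ Bad, lparam τ tstar c ∈ Hn N D (n+1) := by
      intro c hc
      set x := lparam τ tstar c with hx
      have hxmem : x ∈ lfiber τ tstar := lparam_mem _ _ _
      -- noninteger coordinates of N • x
      have hni0 : ∀ k : ℤ, ((N:ℝ) • x) 0 ≠ (k:ℝ) := by
        intro k hk
        exact hc (Set.mem_union_left _ ⟨k, by simpa [hx] using hk.symm⟩)
      have hni1 : ∀ k : ℤ, ((N:ℝ) • x) 1 ≠ (k:ℝ) := by
        intro k hk
        exact hc (Set.mem_union_right _ ⟨k, by simpa [hx] using hk.symm⟩)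
      -- level-1 membership
      obtain ⟨w, hw⟩ := mem_Hn_iff.mp (hΩ hxmem)
      rw [approx] at hw
      simp only [Set.mem_iUnion] at hw
      obtain ⟨d, hd, y, hy, hxy⟩ := hw
      set p : ℤ × ℤ := (d.1 + N * w.1, d.2 + N * w.2) with hp
      have hyp : (N:ℝ) • x - emb p = y := by
        have h1 : (N:ℝ) • (x - emb w) = y + emb d := by
          rw [← hxy, smul_smul, mul_inv_cancel₀ hNne, one_smul]
        have h2 : (N:ℝ) • x = y + emb d + (N:ℝ) • emb w := by
          rw [← h1, smul_sub]; abel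
        rw [h2]
        apply plane_ext <;> simp [hp] <;> push_cast <;> ring
      -- N • x is in Hₙ by the induction hypothesis
      have hNx : (N:ℝ) • x ∈ Hn N D n := by
        obtain ⟨a, b, hab⟩ := bezout hs hgcd hτ u0
        have h1 : (N:ℝ) • x - emb (a, b) ∈ lfiber τ tstar := by
          rw [lfiber, Set.mem_setOf_eq, proj_sub_emb, proj_smul]
          have : proj τ x = tstar := hxmem
          rw [this, hfix, hab]
          simp
        have h2 := ih h1
        have h3 := Hn_add_emb (a, b) h2
        rwa [sub_add_cancel] at h3
      obtain ⟨z, hz⟩ := mem_Hn_iff.mp hNx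
      -- z = p by floor uniqueness
      have hzup : z = p := by
        have hyu : (N:ℝ) • x - emb p ∈ unitSq := hyp ▸ hy
        have hzu : (N:ℝ) • x - emb z ∈ unitSq := approx_subset_unitSq hN0 hD n hz
        have e0p : p.1 = ⌊((N:ℝ) • x) 0⌋ :=
          floor_of_unit (by simpa using hyu.1.1) (by simpa using hyu.1.2) hni0
        have e1p : p.2 = ⌊((N:ℝ) • x) 1⌋ :=
          floor_of_unit (by simpa using hyu.2.1) (by simpa using hyu.2.2) hni1
        have e0z : z.1 = ⌊((N:ℝ) • x) 0⌋ :=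
          floor_of_unit (by simpa using hzu.1.1) (by simpa using hzu.1.2) hni0
        have e1z : z.2 = ⌊((N:ℝ) • x) 1⌋ :=
          floor_of_unit (by simpa using hzu.2.1) (by simpa using hzu.2.2) hni1
        exact Prod.ext (e0z.trans e0p.symm) (e1z.trans e1p.symm)
      rw [hzup] at hz
      -- assemble membership in H_{n+1}
      rw [mem_Hn_iff]
      refine ⟨w, ?_⟩
      rw [approx]
      simp only [Set.mem_iUnion]
      refine ⟨d, hd, (N:ℝ) • x - emb p, hz, ?_⟩
      have : (N:ℝ) • x - emb p + emb d = (N:ℝ) • (x - emb w) := by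
        rw [smul_sub]
        apply plane_ext <;> simp [hp] <;> push_cast <;> ring
      show (N:ℝ)⁻¹ • ((N:ℝ) • x - emb p + emb d) = x - emb w
      rw [this, smul_smul, inv_mul_cancel₀ hNne, one_smul]
    -- conclude by density of good parameters and closedness of H_{n+1}
    intro x hx
    rw [mem_lfiber_iff] at hx
    rw [hx]
    have hdense : Dense Badᶜ := hBadc.dense_compl ℝ
    have h1 : Set.range (lparam τ tstar) ⊆ closure (lparam τ tstar '' Badᶜ) := by
      rw [← Set.image_univ, ← hdense.closure_eq]
      exact (image_closure_subset_closure_image (continuous_lparam τ tstar))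
    have h2 : closure (lparam τ tstar '' Badᶜ) ⊆ Hn N D (n+1) := by
      rw [← (isClosed_Hn N D (n+1)).closure_eq]
      apply closure_mono
      rintro _ ⟨c, hc, rfl⟩
      exact hgood c hc
    exact h2 (h1 ⟨x 0, rfl⟩)

end Aux3
section Aux4
variable {N : ℕ} {D : Finset (ℤ × ℤ)}

/-- Abstract countability: a set trapped by the one-interval window is countable in the window. -/
lemma window_induction {s : ℕ} (hN : 2 ≤ N) (hs : 0 < s) {T : Set ℝ} {A : Finset ℝ} {u0 : ℤ}
    (hwin : ∀ t ∈ T, t ∈ Icc 0 (1/(s:ℝ)) →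
      t ∈ ↑A ∪ Icc ((u0:ℝ)/((N:ℝ)*s)) (((u0:ℝ)+1)/((N:ℝ)*s)))
    (hmap : ∀ t ∈ T, (N:ℝ)*t - (u0:ℝ)/s ∈ T)
    (hu0 : 0 ≤ u0) (hu1 : u0 ≤ (N:ℤ) - 1) :
    ∀ (k : ℕ), ∀ t ∈ T, t ∈ Icc 0 (1/(s:ℝ)) →
      (∃ j, ∃ a ∈ A, t = (fun t => (t + (u0:ℝ)/s)/N)^[j] a) ∨
      |t - (u0:ℝ)/(((N:ℝ)-1)*s)| ≤ (1/s) / N^k := by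
  have hNR : (2:ℝ) ≤ N := by exact_mod_cast hN
  have hsR : (0:ℝ) < s := by exact_mod_cast hs
  have hu0R : (0:ℝ) ≤ (u0:ℝ) := by exact_mod_cast hu0
  have hu1R : (u0:ℝ) ≤ (N:ℝ) - 1 := by
    have : ((u0:ℤ):ℝ) ≤ (((N:ℤ) - 1 : ℤ):ℝ) := by exact_mod_cast hu1
    push_cast at this; linarith
  set tstar : ℝ := (u0:ℝ)/(((N:ℝ)-1)*s) with htstar
  have htstar_mem : tstar ∈ Icc (0:ℝ) (1/(s:ℝ)) := by
    constructor
    · apply div_nonneg hu0R; nlinarith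
    · rw [div_le_div_iff₀ (by nlinarith) hsR]
      nlinarith
  intro k
  induction k with
  | zero =>
    intro t _ ht'
    right
    simp only [pow_zero, div_one]
    rw [abs_le]
    constructor <;> linarith [ht'.1, ht'.2, htstar_mem.1, htstar_mem.2]
  | succ k ih =>
    intro t htT ht'
    rcases hwin t htT ht' with hA | hB
    · exact Or.inl ⟨0, t, hA, rfl⟩
    · set t' := (N:ℝ)*t - (u0:ℝ)/s with ht'def
      have ht'T : t' ∈ T := hmap t htT
      have ht'I : t' ∈ Icc (0:ℝ) (1/(s:ℝ)) := by
        constructor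
        · have := hB.1
          rw [div_le_iff₀ (by nlinarith : (0:ℝ) < (N:ℝ)*s)] at this
          rw [ht'def]
          have : (u0:ℝ)/s ≤ (N:ℝ)*t := by
            rw [div_le_iff₀ hsR]; nlinarith
          linarith
        · have h2 := hB.2
          rw [le_div_iff₀ (by nlinarith : (0:ℝ) < (N:ℝ)*s)] at h2
          rw [ht'def, sub_le_iff_le_add, ← add_div, le_div_iff₀ hsR]
          nlinarith
      rcases ih t' ht'T ht'I with ⟨j, a, ha, haj⟩ | hclose
      · left
        refine ⟨j+1, a, ha, ?_⟩
        rw [Function.iterate_succ_apply', ← haj, ht'def]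
        field_simp
        ring
      · right
        have hNne : (N:ℝ) ≠ 0 := by linarith
        have hden : ((N:ℝ)-1)*s ≠ 0 := ne_of_gt (by nlinarith)
        have hN1 : (N:ℝ) - 1 ≠ 0 := by linarith
        have hfp : ((tstar + (u0:ℝ)/s))/N = tstar := by
          rw [htstar]
          field_simp
          ring
        have hts : t = (t' + (u0:ℝ)/s)/N := by
          rw [ht'def]
          field_simp
          ring
        rw [hts, ← hfp]
        have : (t' + (u0:ℝ)/s)/(N:ℝ) - (tstar + (u0:ℝ)/s)/N = (t' - tstar)/N := by ring
        rw [this, abs_div, abs_of_pos (by linarith : (0:ℝ) < (N:ℝ))]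
        rw [div_le_div_iff₀ (by linarith) (by positivity : (0:ℝ) < (N:ℝ)^(k+1))]
        have h1 : |t' - tstar| ≤ (1/(s:ℝ))/(N:ℝ)^k := hclose
        calc |t' - tstar| * (N:ℝ)^(k+1) = |t' - tstar| * ((N:ℝ)^k * N) := by ring
          _ ≤ (1/(s:ℝ))/(N:ℝ)^k * ((N:ℝ)^k * N) := mul_le_mul_of_nonneg_right h1 (by positivity)
          _ = 1/(s:ℝ) * N := by
              rw [div_mul_eq_mul_div, mul_comm ((N:ℝ)^k) (N:ℝ), ← mul_assoc,
                mul_div_assoc, div_self (by positivity : ((N:ℝ)^k) ≠ 0), mul_one]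

lemma window_countable {s : ℕ} (hN : 2 ≤ N) (hs : 0 < s) {T : Set ℝ} {A : Finset ℝ} {u0 : ℤ}
    (hwin : ∀ t ∈ T, t ∈ Icc 0 (1/(s:ℝ)) →
      t ∈ ↑A ∪ Icc ((u0:ℝ)/((N:ℝ)*s)) (((u0:ℝ)+1)/((N:ℝ)*s)))
    (hmap : ∀ t ∈ T, (N:ℝ)*t - (u0:ℝ)/s ∈ T)
    (hu0 : 0 ≤ u0) (hu1 : u0 ≤ (N:ℤ) - 1) :
    (T ∩ Icc 0 (1/(s:ℝ))).Countable := by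
  have key := window_induction hN hs hwin hmap hu0 hu1
  have hsub : T ∩ Icc 0 (1/(s:ℝ)) ⊆
      {(u0:ℝ)/(((N:ℝ)-1)*s)} ∪ ⋃ j : ℕ, (fun t => (t + (u0:ℝ)/s)/N)^[j] '' ↑A := by
    rintro t ⟨htT, htI⟩
    by_cases hiter : ∃ j, ∃ a ∈ A, t = (fun t => (t + (u0:ℝ)/s)/N)^[j] a
    · obtain ⟨j, a, ha, rfl⟩ := hiter
      exact Set.mem_union_right _ (Set.mem_iUnion.mpr ⟨j, a, ha, rfl⟩)
    · left
      have hclose : ∀ k : ℕ, |t - (u0:ℝ)/(((N:ℝ)-1)*s)| ≤ (1/s) / N^k := by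
        intro k
        rcases key k t htT htI with h | h
        · exact absurd h hiter
        · exact h
      have : |t - (u0:ℝ)/(((N:ℝ)-1)*s)| ≤ 0 := by
        by_contra hc
        push_neg at hc
        obtain ⟨k, hk⟩ := pow_unbounded_of_one_lt
          ((1/(s:ℝ)) / |t - (u0:ℝ)/(((N:ℝ)-1)*s)|) (by exact_mod_cast hN.trans_lt' one_lt_two : (1:ℝ) < N)
        have hsR : (0:ℝ) < s := by exact_mod_cast hs
        have := hclose k
        rw [div_lt_iff₀ (by positivity)] at hk
        rw [le_div_iff₀ (by positivity : (0:ℝ) < (N:ℝ)^k)] at this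
        nlinarith
      have := abs_nonneg (t - (u0:ℝ)/(((N:ℝ)-1)*s))
      have heq : |t - (u0:ℝ)/(((N:ℝ)-1)*s)| = 0 := le_antisymm ‹_› ‹_›
      rw [abs_eq_zero, sub_eq_zero] at heq
      simpa using heq
  apply Set.Countable.mono hsub
  apply Set.Countable.union (Set.countable_singleton _)
  exact Set.countable_iUnion fun j => (A.countable_toSet).image _

end Aux4
section Aux5
variable {N : ℕ} {D : Finset (ℤ × ℤ)}

lemma isClosed_FS : IsClosed (FS N D) :=
  isClosed_iInter fun n => (isCompact_approx N D (n+1)).isClosed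

lemma exists_seg {a v : Plane} (hline : ∀ t : ℝ, a + t • v ∈ orbitH N D) :
    ∃ z : ℤ × ℤ, ∃ c₀ ε : ℝ, 0 < ε ∧ ∀ c ∈ ball c₀ ε, a + c • v - emb z ∈ FS N D := by
  have hcl : ∀ z : ℤ × ℤ, IsClosed {c : ℝ | a + c • v - emb z ∈ FS N D} := by
    intro z
    have hcont : Continuous fun c : ℝ => a + c • v - emb z :=
      (continuous_const.add (continuous_id.smul continuous_const)).sub continuous_const
    exact isClosed_FS.preimage hcont
  have hcover : (⋃ z : ℤ × ℤ, {c : ℝ | a + c • v - emb z ∈ FS N D}) = Set.univ := by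
    ext c
    simp only [Set.mem_iUnion, Set.mem_univ, iff_true]
    exact mem_orbitH_iff.mp (hline c)
  obtain ⟨z, hz⟩ := nonempty_interior_of_iUnion_of_closed hcl hcover
  obtain ⟨c₀, hc₀⟩ := hz
  obtain ⟨ε, hε, hball⟩ := Metric.mem_nhds_iff.mp (mem_interior_iff_mem_nhds.mp hc₀)
  exact ⟨z, c₀, ε, hε, fun c hc => hball hc⟩

lemma line_slope {τ : ℝ}
    (hslope : ∀ x ∈ FS N D, connectedComponentIn (FS N D) x ≠ {x} →
      ∃ a b : Plane, a 0 ≠ b 0 ∧ connectedComponentIn (FS N D) x = segment ℝ a b ∧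
        b 1 - a 1 = τ * (b 0 - a 0))
    {a v : Plane} (hv : v ≠ 0) (hline : ∀ t : ℝ, a + t • v ∈ orbitH N D) :
    v 0 ≠ 0 ∧ v 1 = τ * v 0 := by
  obtain ⟨z, c₀, ε, hε, hseg⟩ := exists_seg hline
  set p : ℝ → Plane := fun c => a + c • v - emb z with hp
  have hpc : Continuous p :=
    (continuous_const.add (continuous_id.smul continuous_const)).sub continuous_const
  have hpI : p '' Icc c₀ (c₀ + ε/2) ⊆ FS N D := by
    rintro _ ⟨c, hc, rfl⟩
    apply hseg
    rw [mem_ball, Real.dist_eq, abs_lt]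
    constructor <;> [linarith [hc.1]; linarith [hc.2]]
  have hconn : IsPreconnected (p '' Icc c₀ (c₀ + ε/2)) :=
    isPreconnected_Icc.image p hpc.continuousOn
  have hmem : p c₀ ∈ p '' Icc c₀ (c₀ + ε/2) := ⟨c₀, ⟨le_refl _, by linarith⟩, rfl⟩
  have hsubC := hconn.subset_connectedComponentIn hmem hpI
  have hpc2 : p (c₀ + ε/2) ∈ connectedComponentIn (FS N D) (p c₀) :=
    hsubC ⟨c₀ + ε/2, ⟨by linarith, le_refl _⟩, rfl⟩
  have hpdiff : p (c₀ + ε/2) - p c₀ = (ε/2) • v := by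
    simp only [hp]
    have : a + (c₀ + ε/2) • v - emb z - (a + c₀ • v - emb z) = ((c₀ + ε/2) - c₀) • v := by
      rw [sub_smul]; abel
    rw [this]
    congr 1
    ring
  have hne : p (c₀ + ε/2) ≠ p c₀ := by
    intro h
    rw [h, sub_self] at hpdiff
    exact hv (by
      have := hpdiff.symm
      rwa [smul_eq_zero_iff_right (by positivity : (ε/2) ≠ 0)] at this)
  have hpc0FS : p c₀ ∈ FS N D := hpI hmem
  have hCne : connectedComponentIn (FS N D) (p c₀) ≠ {p c₀} := by
    intro h
    rw [h, Set.mem_singleton_iff] at hpc2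
    exact hne hpc2
  obtain ⟨A, B, hAB0, hCeq, hABslope⟩ := hslope (p c₀) hpc0FS hCne
  have h1 : p c₀ ∈ segment ℝ A B := by
    rw [← hCeq]; exact mem_connectedComponentIn hpc0FS
  have h2 : p (c₀ + ε/2) ∈ segment ℝ A B := by
    rw [← hCeq]; exact hpc2
  rw [segment_eq_image'] at h1 h2
  obtain ⟨θ₁, _, e1⟩ := h1
  obtain ⟨θ₂, _, e2⟩ := h2
  have hdiff : (ε/2) • v = (θ₂ - θ₁) • (B - A) := by
    rw [← hpdiff, ← e1, ← e2, sub_smul]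
    module
  set μ : ℝ := (ε/2)⁻¹ * (θ₂ - θ₁) with hμ
  have hvμ : v = μ • (B - A) := by
    have hε2 : (ε/2) ≠ 0 := by positivity
    calc v = (ε/2)⁻¹ • ((ε/2) • v) := by rw [smul_smul, inv_mul_cancel₀ hε2, one_smul]
      _ = (ε/2)⁻¹ • ((θ₂ - θ₁) • (B - A)) := by rw [hdiff]
      _ = μ • (B - A) := by rw [smul_smul]
  have hμ0 : μ ≠ 0 := by
    intro h
    rw [h, zero_smul] at hvμ
    exact hv hvμ
  constructor
  · rw [hvμ]
    simp only [smul_app, sub_app]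
    exact mul_ne_zero hμ0 (sub_ne_zero.mpr fun hc => hAB0 hc.symm)
  · rw [hvμ]
    simp only [smul_app, sub_app]
    rw [hABslope]
    ring

lemma linesIn_subset_fibers {τ : ℝ}
    (hslope : ∀ x ∈ FS N D, connectedComponentIn (FS N D) x ≠ {x} →
      ∃ a b : Plane, a 0 ≠ b 0 ∧ connectedComponentIn (FS N D) x = segment ℝ a b ∧
        b 1 - a 1 = τ * (b 0 - a 0)) :
    linesIn (orbitH N D) ⊆ ⋃ t ∈ {t : ℝ | lfiber τ t ⊆ orbitH N D}, lfiber τ t := by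
  rintro x ⟨a, v, hv, ⟨t₀, rfl⟩, hline⟩
  obtain ⟨hv0, hv1⟩ := line_slope hslope hv hline
  have hfib : lfiber τ (proj τ a) ⊆ orbitH N D := by
    intro y hy
    have hyy : y 1 - τ * y 0 = a 1 - τ * a 0 := hy
    have hrepr : y = a + ((y 0 - a 0)/(v 0)) • v := by
      apply plane_ext
      · simp only [add_app, smul_app]
        field_simp
        ring
      · simp only [add_app, smul_app, hv1]
        field_simp
        linear_combination hyy
    rw [hrepr]
    exact hline _
  have hx : a + t₀ • v ∈ lfiber τ (proj τ a) := by
    show proj τ (a + t₀ • v) = proj τ a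
    simp only [proj, add_app, smul_app, hv1]
    ring
  exact Set.mem_biUnion hfib hx

lemma fiber_subset_orbitH_mem_Tset (hN : 0 < N)
    (hD : ∀ d ∈ D, 0 ≤ d.1 ∧ d.1 ≤ (N : ℤ) - 1 ∧ 0 ≤ d.2 ∧ d.2 ≤ (N : ℤ) - 1)
    {τ t : ℝ} (h : lfiber τ t ⊆ orbitH N D) : t ∈ Tset N D τ := by
  intro n x hx
  obtain ⟨z, hz⟩ := mem_orbitH_iff.mp (h hx)
  exact mem_Hn_iff.mpr ⟨z, FS_subset_approx hN hD n hz⟩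

lemma lipschitz_lparam (τ t : ℝ) :
    LipschitzWith (Real.toNNReal (1 + |τ|)) (lparam τ t) := by
  apply LipschitzWith.of_dist_le_mul
  intro c c'
  rw [Real.coe_toNNReal _ (by positivity : (0:ℝ) ≤ 1 + |τ|)]
  rw [EuclideanSpace.dist_eq]
  have hd : ∑ i : Fin 2, dist (lparam τ t c i) (lparam τ t c' i) ^ 2 =
      dist c c' ^ 2 + dist (τ * c + t) (τ * c' + t) ^ 2 := by
    rw [Fin.sum_univ_two]
    rfl
  rw [hd]
  have h2 : dist (τ * c + t) (τ * c' + t) = |τ| * dist c c' := by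
    rw [Real.dist_eq, Real.dist_eq, ← abs_mul]
    congr 1
    ring
  rw [h2]
  have hnn : (0:ℝ) ≤ (1 + |τ|) * dist c c' := by positivity
  rw [show dist c c' ^2 + (|τ| * dist c c')^2 = dist c c' ^ 2 * (1 + |τ|^2) by ring]
  calc Real.sqrt (dist c c' ^ 2 * (1 + |τ|^2)) ≤ Real.sqrt (((1 + |τ|) * dist c c')^2) := by
        apply Real.sqrt_le_sqrt
        nlinarith [dist_nonneg (x := c) (y := c'), abs_nonneg τ]
    _ = (1 + |τ|) * dist c c' := Real.sqrt_sq hnn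

lemma dimH_lfiber_le (τ t : ℝ) : dimH (lfiber τ t) ≤ 1 := by
  rw [lfiber_eq_range]
  calc dimH (Set.range (lparam τ t)) ≤ dimH (Set.univ : Set ℝ) :=
        (lipschitz_lparam τ t).dimH_range_le
    _ = 1 := Real.dimH_univ

end Aux5
section Aux6
variable {N : ℕ} {D : Finset (ℤ × ℤ)}

lemma lipschitz_app0 : LipschitzWith 1 (fun x : Plane => x 0) := by
  apply LipschitzWith.of_dist_le_mul
  intro x y
  rw [NNReal.coe_one, one_mul, EuclideanSpace.dist_eq]
  calc dist (x 0) (y 0) = Real.sqrt (dist (x 0) (y 0) ^ 2) := (Real.sqrt_sq dist_nonneg).symm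
    _ ≤ Real.sqrt (∑ i : Fin 2, dist (x i) (y i) ^ 2) := by
        apply Real.sqrt_le_sqrt
        rw [Fin.sum_univ_two]
        nlinarith [dist_nonneg (x := x 1) (y := y 1)]

lemma Tset_shift_int {r : ℤ} {s : ℕ} {τ : ℝ} (hs : 0 < s) (hgcd : Int.gcd r (s:ℤ) = 1)
    (hτ : τ = (r:ℝ) / s) (k : ℤ) {t : ℝ} (ht : t ∈ Tset N D τ) :
    t + (k:ℝ)/s ∈ Tset N D τ := by
  obtain ⟨a, b, hab⟩ := bezout hs hgcd hτ k
  rw [← hab]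
  exact Tset_shift a b ht

lemma Tset_countable {r : ℤ} {s : ℕ} {τ : ℝ} (hN : 2 ≤ N) (hs : 0 < s)
    (hgcd : Int.gcd r (s:ℤ) = 1) (hτ : τ = (r:ℝ) / s) {A : Finset ℝ} {u0 : ℤ}
    (hwin : ∀ t ∈ Tset N D τ, t ∈ Icc 0 (1/(s:ℝ)) →
      t ∈ ↑A ∪ Icc ((u0:ℝ)/((N:ℝ)*s)) (((u0:ℝ)+1)/((N:ℝ)*s)))
    (hu0 : 0 ≤ u0) (hu1 : u0 ≤ (N:ℤ) - 1) : (Tset N D τ).Countable := by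
  have hN0 : 0 < N := by omega
  have hsR : (0:ℝ) < s := by exact_mod_cast hs
  have hmap : ∀ t ∈ Tset N D τ, (N:ℝ)*t - (u0:ℝ)/s ∈ Tset N D τ := by
    intro t ht
    have h1 := Tset_scale hN0 ht
    have h2 := Tset_shift_int hs hgcd hτ (-u0) h1
    have e : (N:ℝ)*t + ((-u0 : ℤ):ℝ)/s = (N:ℝ)*t - (u0:ℝ)/s := by push_cast; ring
    rwa [e] at h2
  have hcw := window_countable hN hs hwin hmap hu0 hu1
  have hsub : Tset N D τ ⊆
      ⋃ k : ℤ, (fun t => t + (k:ℝ)/s) '' (Tset N D τ ∩ Icc 0 (1/(s:ℝ))) := by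
    intro t ht
    set k := ⌊t * s⌋ with hk
    have h1 : t - (k:ℝ)/s ∈ Tset N D τ := by
      have h := Tset_shift_int hs hgcd hτ (-k) ht
      have e : t + ((-k : ℤ):ℝ)/s = t - (k:ℝ)/s := by push_cast; ring
      rwa [e] at h
    have h2 : t - (k:ℝ)/s ∈ Icc 0 (1/(s:ℝ)) := by
      constructor
      · rw [sub_nonneg, div_le_iff₀ hsR]
        exact Int.floor_le (t * s)
      · rw [sub_le_iff_le_add, ← add_div, le_div_iff₀ hsR]
        have := Int.lt_floor_add_one (t * s)
        push_cast
        linarith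
    exact Set.mem_iUnion.mpr ⟨k, ⟨t - (k:ℝ)/s, ⟨h1, h2⟩, by ring⟩⟩
  exact Set.Countable.mono hsub (Set.countable_iUnion fun k => (hcw.image _))

end Aux6
/-- In the slope setup, if `m = 1` and `q ≥ 1` then `dim_H (𝓗 ∩ K) = 1`,
where `𝓗` is the union of all lines in `H`. -/
theorem stmt15 (N : ℕ) (D : Finset (ℤ × ℤ)) (r : ℤ) (s : ℕ) (τ : ℝ)
    (A₁ : Finset ℝ) (q m : ℕ) (u : Fin m → ℤ)
    (h : SlopeSetup N D r s τ A₁ q m u) (hm : m = 1) (hq : 1 ≤ q) :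
    dimH (linesIn (orbitH N D) ∩ FS N D) = 1 := by
  subst hm
  obtain ⟨hN, hD, hr, hs, hgcd, hτ, hsing, hnondeg, hslope, hqA, humono, hurange,
    hdecomp, hdisj, hiso, hcomps⟩ := h
  obtain ⟨hDcard, hDbound⟩ := hD
  have hN0 : 0 < N := by omega
  have hNR : (0:ℝ) < N := by exact_mod_cast hN0
  have hNR2 : (2:ℝ) ≤ N := by exact_mod_cast hN
  have hsR : (0:ℝ) < s := by exact_mod_cast hs
  set u0 : ℤ := u 0 with hu0def
  obtain ⟨hu0, hu1⟩ := hurange 0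
  have hu0R : (0:ℝ) ≤ (u0:ℝ) := by exact_mod_cast hu0
  have hu1R : (u0:ℝ) ≤ (N:ℝ) - 1 := by
    have : ((u0:ℤ):ℝ) ≤ (((N:ℤ) - 1 : ℤ):ℝ) := by exact_mod_cast hu1
    push_cast at this; linarith
  -- the fixed point of the interval map
  set tstar : ℝ := (u0:ℝ)/(((N:ℝ)-1)*s) with htstardef
  have hden : (0:ℝ) < ((N:ℝ)-1)*s := by nlinarith
  have htstar_int : tstar ∈ Icc ((u0:ℝ)/((N:ℝ)*s)) (((u0:ℝ)+1)/((N:ℝ)*s)) := by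
    constructor
    · rw [htstardef, div_le_div_iff₀ (by nlinarith) hden]
      nlinarith
    · rw [htstardef, div_le_div_iff₀ hden (by nlinarith)]
      nlinarith
  have htstar_mem : tstar ∈ OmegaN N D τ s 1 := by
    rw [hdecomp]
    right
    exact Set.mem_iUnion.mpr ⟨0, htstar_int⟩
  have hN1 : (N:ℝ) - 1 ≠ 0 := by linarith
  have hfix : (N:ℝ) * tstar = tstar + (u0:ℝ)/s := by
    rw [htstardef]
    field_simp
    ring
  have hΩ1 : lfiber τ tstar ⊆ Hn N D 1 := OmegaN_fiber_subset htstar_mem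
  have hfibH : ∀ n, lfiber τ tstar ⊆ Hn N D n :=
    fiber_fixed_subset_Hn hN hDbound hr hs hgcd hτ hfix hΩ1
  have hfib_orbit : lfiber τ tstar ⊆ orbitH N D := fun x hx =>
    mem_orbitH_of_forall_Hn hN0 hDbound (fun n => hfibH n hx)
  -- the line through tstar
  set aa : Plane := lparam τ tstar 0 with haadef
  set vv : Plane := WithLp.toLp 2 ![1, τ] with hvvdef
  have hvv0 : vv 0 = 1 := rfl
  have hvv1 : vv 1 = τ := rfl
  have hvv : vv ≠ 0 := by
    intro hcon
    have : vv 0 = (0 : Plane) 0 := by rw [hcon]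
    rw [hvv0] at this
    exact one_ne_zero this
  have hparam : ∀ c : ℝ, aa + c • vv = lparam τ tstar c := by
    intro c
    apply plane_ext
    · simp [haadef, hvvdef]
    · simp [haadef, hvvdef]; ring
  have hline : ∀ c : ℝ, aa + c • vv ∈ orbitH N D := fun c => by
    rw [hparam]; exact hfib_orbit (lparam_mem _ _ _)
  -- lower bound via Baire
  obtain ⟨z, c₀, ε, hε, hseg⟩ := exists_seg hline
  have hlower : 1 ≤ dimH (linesIn (orbitH N D) ∩ FS N D) := by
    set g : ℝ → Plane := fun c => aa + c • vv - emb z with hgdef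
    have hW : ∀ c ∈ ball c₀ ε, g c ∈ linesIn (orbitH N D) ∩ FS N D := by
      intro c hc
      refine ⟨⟨aa - emb z, vv, hvv, ⟨c, by rw [hgdef]; abel⟩, ?_⟩, hseg c hc⟩
      intro t
      have e : aa - emb z + t • vv = (aa + t • vv) + emb (-z) := by rw [emb_neg]; abel
      rw [e]
      exact orbitH_add_emb _ (hline t)
    have himg : ball (c₀ - (z.1:ℝ)) ε ⊆
        (fun x : Plane => x 0) '' (linesIn (orbitH N D) ∩ FS N D) := by
      intro y hy
      refine ⟨g (y + (z.1:ℝ)), hW _ ?_, ?_⟩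
      · rw [mem_ball, Real.dist_eq] at hy ⊢
        have : y + (z.1:ℝ) - c₀ = y - (c₀ - (z.1:ℝ)) := by ring
        rw [this]
        exact hy
      · show (g (y + (z.1:ℝ))) 0 = y
        simp [hgdef, haadef, hvvdef]
    calc (1:ENNReal) = dimH (ball (c₀ - (z.1:ℝ)) ε) := by
          rw [Real.dimH_of_mem_nhds (Metric.ball_mem_nhds _ hε), Module.finrank_self,
            Nat.cast_one]
      _ ≤ dimH ((fun x : Plane => x 0) '' (linesIn (orbitH N D) ∩ FS N D)) := dimH_mono himg
      _ ≤ dimH (linesIn (orbitH N D) ∩ FS N D) := lipschitz_app0.dimH_image_le _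
  -- upper bound via countability of line offsets
  have hwin : ∀ t ∈ Tset N D τ, t ∈ Icc 0 (1/(s:ℝ)) →
      t ∈ ↑A₁ ∪ Icc ((u0:ℝ)/((N:ℝ)*s)) (((u0:ℝ)+1)/((N:ℝ)*s)) := by
    intro t ht htI
    have hmem := Tset_mem_OmegaN ht htI
    rw [hdecomp] at hmem
    rcases hmem with hA | hB
    · exact Or.inl hA
    · right
      obtain ⟨i, hi⟩ := Set.mem_iUnion.mp hB
      rwa [Subsingleton.elim i 0] at hi
  have hcount := Tset_countable hN hs hgcd hτ hwin hu0 hu1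
  have hupper : dimH (linesIn (orbitH N D) ∩ FS N D) ≤ 1 := by
    have hsub2 : linesIn (orbitH N D) ∩ FS N D ⊆ ⋃ t ∈ Tset N D τ, lfiber τ t := by
      intro x hx
      have hmem := linesIn_subset_fibers hslope hx.1
      obtain ⟨t, htS, hxt⟩ := Set.mem_iUnion₂.mp hmem
      exact Set.mem_biUnion (fiber_subset_orbitH_mem_Tset hN0 hDbound htS) hxt
    calc dimH (linesIn (orbitH N D) ∩ FS N D) ≤ dimH (⋃ t ∈ Tset N D τ, lfiber τ t) :=
          dimH_mono hsub2
      _ = ⨆ t ∈ Tset N D τ, dimH (lfiber τ t) := dimH_bUnion hcount _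
      _ ≤ 1 := iSup₂_le fun t _ => dimH_lfiber_le τ t
  exact le_antisymm hupper hlower
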